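/- arXiv:1709.08529 — 2 statements merged into one kernel-verified Lean document; each statement's English description precedes it below -/
import Mathlib

section
/- Let M be a von Neumann algebra (or more generally a unital C*-algebra), and let e be a partial isometry in M. An element x ∈ B_M (the closed unit ball) satisfies x e* = e e* if and only if x = e + (1 − e e*) x (1 − e* e). Consequently the set F_e = {x ∈ B_M : x e* = e e*} equals e + (1 − e e*) B_M (1 − e* e). -/
/-!
Write `p = e e*` and `q = e* e`; both are projections. If `x e* = e e*`, then `a = e* x` is a
contraction with `a q = q`, and a contraction fixing the range of a projection `q` on the right
also does so on the left: writing `q a = q + b` with `b = q a (1 - q)`, one gets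
`q + b b* = q a a* q ≤ q`, so `b = 0`. Hence `e* x = e* e`, i.e. `p x = e`, and expanding
`(1 - p) x (1 - q)` gives `x - e`. Conversely, `z = (1 - p) x (1 - q)` satisfies `z e* = 0`, so
`(e + z)(e + z)* = p + z z* ≤ p + (1 - p) = 1`.
-/
section PartialIsometry

variable {A : Type*} [Ring A] [StarRing A] {e : A}

theorem star_mul_self_mul_star_of_mul_star_mul_self (he : e * star e * e = e) :
    star e * e * star e = star e := by
  simpa [star_mul, mul_assoc] using congrArg star he

theorem isStarProjection_mul_star_of_mul_star_mul_self (he : e * star e * e = e) :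
    IsStarProjection (e * star e) where
  isIdempotentElem := by rw [IsIdempotentElem, ← mul_assoc, he]
  isSelfAdjoint := .mul_star_self e

theorem isStarProjection_star_mul_of_mul_star_mul_self (he : e * star e * e = e) :
    IsStarProjection (star e * e) where
  isIdempotentElem := by
    rw [IsIdempotentElem, ← mul_assoc, star_mul_self_mul_star_of_mul_star_mul_self he]
  isSelfAdjoint := .star_mul_self e

theorem mul_one_sub_star_mul_self_of_mul_star_mul_self (he : e * star e * e = e) :
    e * (1 - star e * e) = 0 := by
  rw [mul_sub, mul_one, ← mul_assoc, he, sub_self]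

theorem one_sub_star_mul_self_mul_star_of_mul_star_mul_self (he : e * star e * e = e) :
    (1 - star e * e) * star e = 0 := by
  rw [sub_mul, one_mul, star_mul_self_mul_star_of_mul_star_mul_self he, sub_self]

theorem translate_mul_star_of_mul_star_mul_self (he : e * star e * e = e) (x : A) :
    (e + (1 - e * star e) * x * (1 - star e * e)) * star e = e * star e := by
  rw [add_mul, mul_assoc _ (1 - star e * e),
    one_sub_star_mul_self_mul_star_of_mul_star_mul_self he, mul_zero, add_zero]

theorem eq_translate_of_mul_star_eq {x : A} (he : e * star e * e = e)
    (hxe : x * star e = e * star e) (hpx : e * star e * x = e) :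
    x = e + (1 - e * star e) * x * (1 - star e * e) := by
  have hxq : x * (star e * e) = e := by rw [← mul_assoc, hxe, he]
  have hpxq : e * star e * x * (star e * e) = e := by rw [hpx, ← mul_assoc, he]
  calc x = e + (x - x * (star e * e) - e * star e * x + e * star e * x * (star e * e)) := by
        rw [hpxq, hxq, hpx]; abel
    _ = e + (1 - e * star e) * x * (1 - star e * e) := by noncomm_ring

end PartialIsometry

section CStarAlgebra

variable {A : Type*} [CStarAlgebra A]

theorem norm_le_one_iff_mul_star_le_one [PartialOrder A] [StarOrderedRing A] {a : A} :
    ‖a‖ ≤ 1 ↔ a * star a ≤ 1 := by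
  rw [← CStarAlgebra.norm_le_one_iff_of_nonneg _ (mul_star_self_nonneg a),
    CStarRing.norm_self_mul_star]
  constructor <;> intro h <;> nlinarith [norm_nonneg a]

theorem IsStarProjection.mul_eq_self_of_mul_eq_self {q a : A} (hq : IsStarProjection q)
    (ha : ‖a‖ ≤ 1) (haq : a * q = q) : q * a = q := by
  let := CStarAlgebra.spectralOrder A
  let := CStarAlgebra.spectralOrderedRing A
  set b := q * a * (1 - q)
  have hqa : q * a = q + b := by
    have hqaq : q * a * q = q := by rw [mul_assoc, haq, hq.isIdempotentElem.eq]
    simp only [b, mul_sub, mul_one, hqaq]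
    abel
  have hqs : star q = q := hq.isSelfAdjoint.star_eq
  have hbq : b * q = 0 := by rw [mul_assoc, hq.one_sub_mul_self, mul_zero]
  have hqb : q * star b = 0 := by simpa [star_mul, hqs] using congrArg star hbq
  have hbb : q + b * star b ≤ q := by
    calc q + b * star b = q * a * star (q * a) := by
          rw [hqa, star_add, hqs, mul_add, add_mul, add_mul, hq.isIdempotentElem.eq, hbq, hqb]
          abel
      _ = q * (a * star a) * star q := by rw [star_mul, mul_assoc, mul_assoc, mul_assoc]
      _ ≤ q * 1 * star q :=
          star_right_conjugate_le_conjugate (norm_le_one_iff_mul_star_le_one.mp ha) q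
      _ = q := by rw [mul_one, hqs, hq.isIdempotentElem.eq]
  have hb : b = 0 := (CStarRing.mul_star_self_eq_zero_iff b).mp <|
    le_antisymm (by simpa using hbb) (mul_star_self_nonneg b)
  rw [hqa, hb, add_zero]

variable {e : A}

theorem norm_le_one_of_mul_star_mul_self (he : e * star e * e = e) : ‖e‖ ≤ 1 := by
  have h := (isStarProjection_star_mul_of_mul_star_mul_self he).norm_le
  rw [CStarRing.norm_star_mul_self] at h
  nlinarith [norm_nonneg e]

theorem mul_star_mul_eq_of_mul_star_eq {x : A} (he : e * star e * e = e) (hx : ‖x‖ ≤ 1)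
    (hxe : x * star e = e * star e) : e * star e * x = e := by
  have hes := star_mul_self_mul_star_of_mul_star_mul_self he
  have ha : ‖star e * x‖ ≤ 1 :=
    (norm_mul_le _ _).trans <|
      mul_le_one₀ (by simpa using norm_le_one_of_mul_star_mul_self he) (norm_nonneg x) hx
  have haq : star e * x * (star e * e) = star e * e := by
    rw [mul_assoc, ← mul_assoc x, hxe, ← mul_assoc, ← mul_assoc, hes]
  have hqa := (isStarProjection_star_mul_of_mul_star_mul_self he).mul_eq_self_of_mul_eq_self
    ha haq
  rw [← mul_assoc, hes] at hqa
  rw [mul_assoc, hqa, ← mul_assoc, he]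

theorem norm_translate_le_one {x : A} (he : e * star e * e = e) (hx : ‖x‖ ≤ 1) :
    ‖e + (1 - e * star e) * x * (1 - star e * e)‖ ≤ 1 := by
  let := CStarAlgebra.spectralOrder A
  let := CStarAlgebra.spectralOrderedRing A
  have hp := (isStarProjection_mul_star_of_mul_star_mul_self he).one_sub
  have hq := (isStarProjection_star_mul_of_mul_star_mul_self he).one_sub
  set z := (1 - e * star e) * x * (1 - star e * e)
  have hze : z * star e = 0 := by
    rw [mul_assoc, one_sub_star_mul_self_mul_star_of_mul_star_mul_self he, mul_zero]
  have hez : e * star z = 0 := by simpa [star_mul] using congrArg star hze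
  have hxqx : x * (1 - star e * e) * star x ≤ 1 :=
    (star_right_conjugate_le_conjugate hq.le_one x).trans <| by
      rwa [mul_one, ← norm_le_one_iff_mul_star_le_one]
  have hzz : z * star z ≤ 1 - e * star e :=
    calc z * star z
        = (1 - e * star e) * (x * (1 - star e * e) * star x) * star (1 - e * star e) := by
          simp only [z, star_mul, hq.isSelfAdjoint.star_eq, mul_assoc]
          rw [← mul_assoc (1 - star e * e) (1 - star e * e), hq.isIdempotentElem.eq]
      _ ≤ (1 - e * star e) * 1 * star (1 - e * star e) :=
          star_right_conjugate_le_conjugate hxqx _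
      _ = 1 - e * star e := by rw [mul_one, hp.isSelfAdjoint.star_eq, hp.isIdempotentElem.eq]
  refine norm_le_one_iff_mul_star_le_one.mpr ?_
  calc (e + z) * star (e + z) = e * star e + z * star z := by
        rw [star_add, mul_add, add_mul, add_mul, hez, hze]; abel
    _ ≤ e * star e + (1 - e * star e) := add_le_add_right hzz _
    _ = 1 := add_sub_cancel _ _

end CStarAlgebra

/-- For a partial isometry `e` in a unital C*-algebra and `x` in the closed unit ball,
`x e* = e e*` iff `x = e + (1 - e e*) x (1 - e* e)`; consequently the face
`F_e = {x ∈ B_M : x e* = e e*}` equals `e + (1 - e e*) B_M (1 - e* e)`. -/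
theorem face_eq_translate {M : Type*} [CStarAlgebra M]
    (e : M) (he : e * star e * e = e) :
    (∀ x : M, ‖x‖ ≤ 1 →
      (x * star e = e * star e ↔ x = e + (1 - e * star e) * x * (1 - star e * e))) ∧
    {x : M | ‖x‖ ≤ 1 ∧ x * star e = e * star e} =
      {y : M | ∃ x : M, ‖x‖ ≤ 1 ∧ y = e + (1 - e * star e) * x * (1 - star e * e)} := by
  have mem_face_iff (x : M) (hx : ‖x‖ ≤ 1) :
      x * star e = e * star e ↔ x = e + (1 - e * star e) * x * (1 - star e * e) :=
    ⟨fun hxe => eq_translate_of_mul_star_eq he hxe (mul_star_mul_eq_of_mul_star_eq he hx hxe),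
      fun h => by rw [h]; exact translate_mul_star_of_mul_star_mul_self he x⟩
  refine ⟨mem_face_iff, Set.ext fun y => ⟨?_, ?_⟩⟩
  · rintro ⟨hy, hye⟩
    exact ⟨y, hy, (mem_face_iff y hy).mp hye⟩
  · rintro ⟨x, hx, rfl⟩
    exact ⟨norm_translate_le_one he hx, translate_mul_star_of_mul_star_mul_self he x⟩
end

section
/- Let A be a unital C*-algebra, let v be a minimal partial isometry in A (i.e. v v* A v v* = ℂ · v v* and v ≠ 0), and let x ∈ A with ‖x‖ = 1 = ‖v‖ and ‖v − x‖ = 2. Then x = −v + (1 − v v*) x (1 − v* v). -/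
/-!
Write `p = v v*` and `q = v* v`. A state `φ` with `φ ((v - x)* (v - x)) = ‖v - x‖² = 4` has
`φ q = 1` and `φ (v* x) = -1`, because each of the four terms of the expansion has modulus at
most one. By minimality `p x q = λ v` for a scalar `λ`; since `φ (1 - q) = 0`, Cauchy–Schwarz
gives `φ (v* x (1 - q)) = 0`, hence `λ = φ (v* x) = -1`. Finally, for a contraction `y` with
`p y q = v` the off-diagonal corners vanish: `p y y* p ≤ p`, while
`p y y* p = p + (p y (1 - q)) (p y (1 - q))*`. Apply this to `y = -x`.
-/

open scoped ComplexOrder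

lemma Complex.eq_of_norm_le_of_le_re {z : ℂ} {r : ℝ} (hz : ‖z‖ ≤ r) (hr : r ≤ z.re) :
    z = r := by
  have hre : z.re = ‖z‖ := le_antisymm (re_le_norm z) (hz.trans hr)
  rw [eq_re_of_ofReal_le (re_eq_norm.mp hre), le_antisymm (hre ▸ hz) hr]

def IsPartialIsometry {R : Type*} [Mul R] [Star R] (v : R) : Prop :=
  v * star v * v = v

namespace IsPartialIsometry

variable {R : Type*} [Semiring R] [StarRing R] {v : R}

lemma star_mul_mul_star (hv : IsPartialIsometry v) : star v * v * star v = star v := by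
  simpa only [star_mul, star_star, mul_assoc] using congrArg star hv

protected lemma star (hv : IsPartialIsometry v) : IsPartialIsometry (star v) := by
  rw [IsPartialIsometry, star_star]
  exact hv.star_mul_mul_star

lemma isStarProjection_mul_star_self (hv : IsPartialIsometry v) :
    IsStarProjection (v * star v) :=
  ⟨by rw [IsIdempotentElem, ← mul_assoc, hv], .mul_star_self v⟩

lemma isStarProjection_star_mul_self (hv : IsPartialIsometry v) :
    IsStarProjection (star v * v) := by
  simpa only [star_star] using hv.star.isStarProjection_mul_star_self

lemma exists_mul_mul_eq_smul_of_minimal {𝕜 : Type*} [CommSemiring 𝕜] [Algebra 𝕜 R]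
    (hv : IsPartialIsometry v)
    (hmin : ∀ a : R, ∃ c : 𝕜, v * star v * a * (v * star v) = c • (v * star v)) (x : R) :
    ∃ c : 𝕜, v * star v * x * (star v * v) = c • v := by
  obtain ⟨c, hc⟩ := hmin (x * star v)
  refine ⟨c, ?_⟩
  calc v * star v * x * (star v * v) = v * star v * x * (star v * v * star v) * v := by
        rw [hv.star_mul_mul_star]; simp only [mul_assoc]
    _ = (v * star v * (x * star v) * (v * star v)) * v := by simp only [mul_assoc]
    _ = c • v := by rw [hc, smul_mul_assoc, hv]

end IsPartialIsometry

section State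

variable {A : Type*} [CStarAlgebra A]

lemma ContinuousLinearMap.im_apply_eq_zero_of_isSelfAdjoint {φ : A →L[ℂ] ℂ} (hφ : ‖φ‖ ≤ 1)
    (hφ1 : φ 1 = 1) {a : A} (ha : IsSelfAdjoint a) : (φ a).im = 0 := by
  have : Nontrivial A := nontrivial_of_ne 1 0 fun h ↦ by simp [h] at hφ1
  -- for real `t`, `‖a + t i‖² = ‖a² + t²‖ ≤ ‖a‖² + t²` while `|φ a + t i|² ≥ t² + 2 t Im (φ a)`
  have key : ∀ t : ℝ, 2 * t * (φ a).im ≤ ‖a‖ ^ 2 := by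
    intro t
    obtain ⟨c, hc⟩ : ∃ c : A, c = algebraMap ℂ A (t * Complex.I) := ⟨_, rfl⟩
    set y := a + c
    have hyy : star y * y = a * a + algebraMap ℂ A ((t : ℂ) ^ 2) := by
      have hcs : star c = -c := by
        rw [hc, ← algebraMap_star_comm, ← map_neg]; simp
      have hcc : c * c = -algebraMap ℂ A ((t : ℂ) ^ 2) := by
        rw [hc, ← map_mul, ← map_neg]; congr 1; ring_nf; simp
      calc star (a + c) * (a + c) = a * a + (a * c - c * a) - c * c := by
            rw [star_add, ha.star_eq, hcs]; noncomm_ring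
        _ = a * a + algebraMap ℂ A ((t : ℂ) ^ 2) := by
            rw [hc, Algebra.commutes, sub_self, ← hc, hcc]; abel
    have hny : ‖φ y‖ ^ 2 ≤ ‖a‖ ^ 2 + t ^ 2 :=
      calc ‖φ y‖ ^ 2 ≤ ‖y‖ ^ 2 := by
            gcongr; simpa using φ.le_of_opNorm_le hφ y
        _ = ‖star y * y‖ := by rw [CStarRing.norm_star_mul_self, sq]
        _ ≤ ‖a‖ ^ 2 + t ^ 2 := by
            rw [hyy]
            refine (norm_add_le _ _).trans (add_le_add ?_ ?_)
            · rw [sq]; exact norm_mul_le a a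
            · rw [norm_algebraMap']; simp
    have hφy : φ y = φ a + t * Complex.I := by
      simp [y, hc, Algebra.algebraMap_eq_smul_one, hφ1]
    rw [hφy, ← Complex.normSq_eq_norm_sq, Complex.normSq_apply] at hny
    simp only [Complex.add_re, Complex.mul_re, Complex.ofReal_re, Complex.I_re, mul_zero,
      Complex.ofReal_im, Complex.I_im, mul_one, sub_self, add_zero, Complex.add_im,
      Complex.mul_im] at hny
    nlinarith [sq_nonneg (φ a).re, sq_nonneg (φ a).im]
  by_contra him
  have := key ((‖a‖ ^ 2 + 1) / (2 * (φ a).im))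
  rw [show 2 * ((‖a‖ ^ 2 + 1) / (2 * (φ a).im)) * (φ a).im = ‖a‖ ^ 2 + 1 by field_simp] at this
  linarith

variable [PartialOrder A] [StarOrderedRing A]

lemma ContinuousLinearMap.apply_nonneg_of_nonneg {φ : A →L[ℂ] ℂ} (hφ : ‖φ‖ ≤ 1)
    (hφ1 : φ 1 = 1) {a : A} (ha : 0 ≤ a) : 0 ≤ φ a := by
  refine Complex.nonneg_iff.mpr
    ⟨?_, (φ.im_apply_eq_zero_of_isSelfAdjoint hφ hφ1 (.of_nonneg ha)).symm⟩
  -- `0 ≤ ‖a‖ - a ≤ ‖a‖`, so `‖a‖ - Re (φ a) ≤ ‖a‖`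
  set b := algebraMap ℝ A ‖a‖ - a
  have hb : 0 ≤ b := sub_nonneg.mpr <|
    (CStarAlgebra.norm_le_iff_le_algebraMap a (norm_nonneg a) ha).mp le_rfl
  have hbn : ‖b‖ ≤ ‖a‖ :=
    (CStarAlgebra.norm_le_iff_le_algebraMap b (norm_nonneg a) hb).mpr (sub_le_self _ ha)
  have hφb : φ b = ‖a‖ - φ a := by
    simp [b, Algebra.algebraMap_eq_smul_one, hφ1]
  have := (Complex.re_le_norm (φ b)).trans ((φ.le_of_opNorm_le hφ b).trans (by simpa using hbn))
  rw [hφb] at this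
  simpa using this

lemma CStarAlgebra.norm_one_add_of_nonneg [Nontrivial A] {h : A} (hh : 0 ≤ h) :
    ‖1 + h‖ = 1 + ‖h‖ := by
  refine le_antisymm ((norm_add_le _ _).trans (by simp)) ?_
  have hmem : ‖h‖ + 1 ∈ spectrum ℝ (algebraMap ℝ A 1 + h) :=
    spectrum.add_mem_add_iff.mpr (CStarAlgebra.norm_mem_spectrum_of_nonneg hh)
  rw [map_one] at hmem
  simpa [add_comm, abs_of_nonneg (by positivity : (0 : ℝ) ≤ ‖h‖ + 1)] using
    spectrum.norm_le_norm_of_mem hmem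

lemma CStarAlgebra.exists_state_apply_eq_norm [Nontrivial A] {h : A} (hh : 0 ≤ h) :
    ∃ φ : A →ₚ[ℂ] ℂ, φ 1 = 1 ∧ (∀ a, ‖φ a‖ ≤ ‖a‖) ∧ φ h = ‖h‖ := by
  -- a functional norming `1 + h` must norm both `1` and `h`
  obtain ⟨ψ, hψ, hψh⟩ := exists_dual_vector'' ℂ (1 + h)
  have hle : ∀ a, ‖ψ a‖ ≤ ‖a‖ := fun a ↦ by simpa using ψ.le_of_opNorm_le hψ a
  have hsum : (ψ 1).re + (ψ h).re = 1 + ‖h‖ := by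
    simpa [norm_one_add_of_nonneg hh] using congrArg Complex.re hψh
  have h1 : ψ 1 = 1 := by
    simpa using Complex.eq_of_norm_le_of_le_re (by simpa using hle 1)
      (by linarith [(Complex.re_le_norm (ψ h)).trans (hle h)] : (1 : ℝ) ≤ (ψ 1).re)
  have hh' : ψ h = ‖h‖ :=
    Complex.eq_of_norm_le_of_le_re (hle h) (by rw [h1, Complex.one_re] at hsum; linarith)
  exact ⟨.mk₀ ψ.toLinearMap fun a ha ↦ ψ.apply_nonneg_of_nonneg hψ h1 ha, h1, hle, hh'⟩

lemma PositiveLinearMap.apply_mul_eq_zero_of_apply_star_mul_self_eq_zero (f : A →ₚ[ℂ] ℂ)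
    {b : A} (hb : f (star b * b) = 0) (a : A) : f (a * b) = 0 := by
  have hnorm : ‖f.toPreGNS b‖ = 0 := by
    simpa [hb] using f.preGNS_norm_sq (f.toPreGNS b)
  have := norm_inner_le_norm (𝕜 := ℂ) (f.toPreGNS (star a)) (f.toPreGNS b)
  rw [hnorm, mul_zero, norm_le_zero_iff, f.preGNS_inner_def] at this
  simpa using this

lemma PositiveLinearMap.apply_star_mul_eq_of_mul_mul_eq_smul (φ : A →ₚ[ℂ] ℂ) {v x : A}
    (hv : IsPartialIsometry v) (hφ1 : φ 1 = 1) (hφq : φ (star v * v) = 1) {c : ℂ}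
    (hc : v * star v * x * (star v * v) = c • v) : φ (star v * x) = c := by
  have hq := hv.isStarProjection_star_mul_self
  have hφ0 : φ (star v * x * (1 - star v * v)) = 0 :=
    φ.apply_mul_eq_zero_of_apply_star_mul_self_eq_zero (by
      rw [hq.one_sub.isSelfAdjoint.star_eq, hq.one_sub.isIdempotentElem.eq, map_sub, hφ1, hφq,
        sub_self]) _
  have hvxq : star v * x * (star v * v) = c • (star v * v) :=
    calc star v * x * (star v * v) = star v * v * star v * x * (star v * v) := by
          rw [hv.star_mul_mul_star]
      _ = star v * (v * star v * x * (star v * v)) := by noncomm_ring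
      _ = c • (star v * v) := by rw [hc, mul_smul_comm]
  calc φ (star v * x) = φ (star v * x * (star v * v) + star v * x * (1 - star v * v)) := by
        congr 1; noncomm_ring
    _ = c := by rw [map_add, hφ0, hvxq, map_smul, hφq, smul_eq_mul, mul_one, add_zero]

end State

section Peirce

variable {A : Type*} [CStarAlgebra A] {v x : A}

lemma IsPartialIsometry.mul_mul_one_sub_eq_zero (hv : IsPartialIsometry v) (hx : ‖x‖ ≤ 1)
    (hpxq : v * star v * x * (star v * v) = v) :
    v * star v * x * (1 - star v * v) = 0 := by
  let _ := CStarAlgebra.spectralOrder A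
  have _ := CStarAlgebra.spectralOrderedRing A
  have hp := hv.isStarProjection_mul_star_self
  set y := v * star v * x * (1 - star v * v)
  have hpx : v * star v * x = v + y :=
    calc v * star v * x = v * star v * x * (star v * v) + y := by simp only [y]; noncomm_ring
      _ = v + y := by rw [hpxq]
  have hvy : v * star y = 0 := by
    have : v * (1 - star v * v) = 0 := by rw [mul_sub, mul_one, ← mul_assoc, hv, sub_self]
    simp only [y, star_mul, hv.isStarProjection_star_mul_self.one_sub.isSelfAdjoint.star_eq,
      ← mul_assoc, this, zero_mul]
  have hyv : y * star v = 0 := by simpa using congrArg star hvy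
  have hxx : x * star x ≤ 1 := by
    refine (CStarAlgebra.norm_le_one_iff_of_nonneg _ (mul_star_self_nonneg x)).mp ?_
    rw [CStarRing.norm_self_mul_star]
    nlinarith [norm_nonneg x]
  have hle : v * star v + y * star y ≤ v * star v :=
    calc v * star v + y * star y = v * star v * x * star (v * star v * x) := by
          rw [hpx, star_add, add_mul, mul_add, mul_add, hvy, hyv, add_zero, zero_add]
      _ = v * star v * (x * star x) * star (v * star v) := by simp only [star_mul, mul_assoc]
      _ ≤ v * star v * 1 * star (v * star v) := star_right_conjugate_le_conjugate hxx _
      _ = v * star v := by rw [mul_one, hp.isSelfAdjoint.star_eq, hp.isIdempotentElem.eq]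
  have hyy : y * star y = 0 :=
    le_antisymm ((add_le_iff_nonpos_right _).mp hle) (mul_star_self_nonneg y)
  exact (CStarRing.mul_star_self_eq_zero_iff y).mp hyy

lemma IsPartialIsometry.eq_add_peirce0 (hv : IsPartialIsometry v) (hx : ‖x‖ ≤ 1)
    (hpxq : v * star v * x * (star v * v) = v) :
    x = v + (1 - v * star v) * x * (1 - star v * v) := by
  have hright := hv.mul_mul_one_sub_eq_zero hx hpxq
  have hleft : (1 - v * star v) * x * (star v * v) = 0 := by
    have hpxq' : star v * star (star v) * star x * (star (star v) * star v) = star v := by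
      simpa only [star_star, star_mul, mul_assoc] using congrArg star hpxq
    simpa only [star_star, star_mul, star_sub, star_one, mul_assoc, star_zero] using
      congrArg star (hv.star.mul_mul_one_sub_eq_zero (by rwa [norm_star]) hpxq')
  calc x = v * star v * x * (star v * v) + v * star v * x * (1 - star v * v)
        + (1 - v * star v) * x * (star v * v) + (1 - v * star v) * x * (1 - star v * v) := by
        noncomm_ring
    _ = v + (1 - v * star v) * x * (1 - star v * v) := by rw [hpxq, hright, hleft]; abel

end Peirce

lemma apply_star_mul_self_eq_one_and_apply_star_mul_eq_neg_one {A F : Type*}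
    [NonUnitalNormedRing A] [StarRing A] [NormedStarGroup A] [FunLike F A ℂ]
    [AddMonoidHomClass F A ℂ] (φ : F) (hφ : ∀ a, ‖φ a‖ ≤ ‖a‖) {v x : A} (hv : ‖v‖ ≤ 1)
    (hx : ‖x‖ ≤ 1) (h : φ (star (v - x) * (v - x)) = 4) :
    φ (star v * v) = 1 ∧ φ (star v * x) = -1 := by
  have hle : ∀ a b : A, ‖a‖ ≤ 1 → ‖b‖ ≤ 1 → ‖φ (star a * b)‖ ≤ 1 := fun a b ha hb ↦
    (hφ _).trans <| (norm_mul_le _ _).trans <| by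
      rw [norm_star]; exact mul_le_one₀ ha (norm_nonneg b) hb
  have hre := congrArg Complex.re h
  rw [star_sub, sub_mul, mul_sub, mul_sub, map_sub, map_sub, map_sub] at hre
  simp only [Complex.sub_re, Complex.re_ofNat] at hre
  have hvv := abs_le.mp ((Complex.abs_re_le_norm _).trans (hle v v hv hv))
  have hvx := abs_le.mp ((Complex.abs_re_le_norm _).trans (hle v x hv hx))
  have hxv := abs_le.mp ((Complex.abs_re_le_norm _).trans (hle x v hx hv))
  have hxx := abs_le.mp ((Complex.abs_re_le_norm _).trans (hle x x hx hx))
  constructor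
  · simpa using Complex.eq_of_norm_le_of_le_re (hle v v hv hv) (by linarith)
  · rw [← neg_neg (φ _), neg_inj]
    simpa using Complex.eq_of_norm_le_of_le_re ((norm_neg _).trans_le (hle v x hv hx))
      (by rw [Complex.neg_re]; linarith)

/-- If `v` is a minimal partial isometry in a unital C*-algebra and `x` has norm one
with `‖v - x‖ = 2`, then `x = -v + (1 - v v*) x (1 - v* v)`. -/
theorem eq_neg_add_peirce0_of_dist_two {A : Type*} [CStarAlgebra A]
    (v x : A) (hv : v * star v * v = v) (hv0 : v ≠ 0)
    (hmin : ∀ a : A, ∃ c : ℂ, (v * star v) * a * (v * star v) = c • (v * star v))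
    (hxn : ‖x‖ = 1) (hvn : ‖v‖ = 1) (hdist : ‖v - x‖ = 2) :
    x = -v + (1 - v * star v) * x * (1 - star v * v) := by
  let _ := CStarAlgebra.spectralOrder A
  have _ := CStarAlgebra.spectralOrderedRing A
  have : Nontrivial A := ⟨v, 0, hv0⟩
  obtain ⟨c, hc⟩ := IsPartialIsometry.exists_mul_mul_eq_smul_of_minimal hv hmin x
  obtain ⟨φ, hφ1, hφ, hφd⟩ :=
    CStarAlgebra.exists_state_apply_eq_norm (star_mul_self_nonneg (v - x))
  rw [CStarRing.norm_star_mul_self, hdist] at hφd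
  obtain ⟨hφq, hφvx⟩ := apply_star_mul_self_eq_one_and_apply_star_mul_eq_neg_one φ hφ hvn.le
    hxn.le (by rw [hφd]; norm_num)
  have hc1 : c = -1 := (φ.apply_star_mul_eq_of_mul_mul_eq_smul hv hφ1 hφq hc).symm.trans hφvx
  have hpxq : v * star v * -x * (star v * v) = v := by
    rw [mul_neg, neg_mul, hc, hc1, neg_one_smul, neg_neg]
  have h := IsPartialIsometry.eq_add_peirce0 hv (by rw [norm_neg, hxn]) hpxq
  rw [mul_neg, neg_mul] at h
  calc x = -(-x) := (neg_neg x).symm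
    _ = -v + (1 - v * star v) * x * (1 - star v * v) := by rw [h]; abel
end
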